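/- If A is a polytope in ℝⁿ whose interior contains the origin 0, then the polar dual A* is also a polytope whose interior contains 0, and A** = A. -/

import Mathlib

open RealInnerProductSpace

/-- The polar dual of `A ⊆ ℝⁿ` with respect to the origin. -/
def polarDual {n : ℕ} (A : Set (EuclideanSpace ℝ (Fin n))) :
    Set (EuclideanSpace ℝ (Fin n)) :=
  {b | ∀ a ∈ A, ⟪a, b⟫ ≤ 1}

/-- A polytope: the convex hull of a finite set of points. -/
def IsPolytope {n : ℕ} (A : Set (EuclideanSpace ℝ (Fin n))) : Prop :=
  ∃ S : Set (EuclideanSpace ℝ (Fin n)), S.Finite ∧ A = convexHull ℝ S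

/-
For `A = conv S` with `S` finite, `A* = S*` is cut out by the finitely many inequalities
`⟪a, b⟫ ≤ 1`, `a ∈ S`. At an extreme point `x` of `S*`, any direction orthogonal to the active
constraints (`⟪a, x⟫ = 1`) can be followed a little both ways, so the active constraints span and
determine `x`; hence `S*` has finitely many extreme points. As `0` is interior to `A`, `A*` is
bounded, hence compact, and Krein–Milman makes it the convex hull of its extreme points.
Since the polar of `closedBall 0 r` is `closedBall 0 r⁻¹`, boundedness of `A` puts `0` in the
interior of `A*`, and `A** = A` is the bipolar theorem, via Hahn–Banach separation.
-/

open Set Metric Filter Topology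

theorem eq_zero_of_mem_extremePoints_of_eventually_add_smul_mem {E : Type*} [AddCommGroup E]
    [Module ℝ E] {C : Set E} {x v : E} (hx : x ∈ C.extremePoints ℝ)
    (hv : ∀ᶠ s in 𝓝 (0 : ℝ), x + s • v ∈ C) : v = 0 := by
  have hv_neg : ∀ᶠ s in 𝓝 (0 : ℝ), x + (-s) • v ∈ C :=
    (continuous_neg.tendsto' (0 : ℝ) 0 neg_zero).eventually hv
  obtain ⟨t, ht, hplus, hminus⟩ := (hv.and hv_neg).exists_gt
  have hseg : x ∈ openSegment ℝ (x + (-t) • v) (x + t • v) :=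
    ⟨1 / 2, 1 / 2, by norm_num, by norm_num, by norm_num, by module⟩
  have hx_eq : x + (-t) • v = x := hx.2 hminus hplus hseg
  simpa [ht.ne'] using hx_eq

section PolarDual

variable {n : ℕ}

theorem polarDual_anti {A B : Set (EuclideanSpace ℝ (Fin n))} (h : A ⊆ B) :
    polarDual B ⊆ polarDual A :=
  fun _ hb a ha => hb a (h ha)

theorem polarDual_eq_biInter (A : Set (EuclideanSpace ℝ (Fin n))) :
    polarDual A = ⋂ a ∈ A, {b | ⟪a, b⟫ ≤ 1} := by
  ext b
  simp [polarDual]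

theorem convex_polarDual (A : Set (EuclideanSpace ℝ (Fin n))) : Convex ℝ (polarDual A) := by
  rw [polarDual_eq_biInter]
  exact convex_iInter₂ fun a _ => convex_halfSpace_le (innerₗ _ a).isLinear 1

theorem isClosed_polarDual (A : Set (EuclideanSpace ℝ (Fin n))) : IsClosed (polarDual A) := by
  rw [polarDual_eq_biInter]
  exact isClosed_biInter fun a _ => isClosed_le (by fun_prop) continuous_const

theorem mem_polarDual_iff_subset_polarDual_singleton {A : Set (EuclideanSpace ℝ (Fin n))}
    {b : EuclideanSpace ℝ (Fin n)} : b ∈ polarDual A ↔ A ⊆ polarDual {b} := by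
  simp [polarDual, subset_def, real_inner_comm]

theorem polarDual_convexHull (S : Set (EuclideanSpace ℝ (Fin n))) :
    polarDual (convexHull ℝ S) = polarDual S := by
  ext b
  simp only [mem_polarDual_iff_subset_polarDual_singleton,
    (convex_polarDual {b}).convexHull_subset_iff]

theorem polarDual_closedBall_zero {r : ℝ} (hr : 0 < r) :
    polarDual (closedBall (0 : EuclideanSpace ℝ (Fin n)) r) = closedBall 0 r⁻¹ := by
  ext b
  simp only [mem_closedBall_zero_iff]
  constructor
  · intro hb
    rcases eq_or_ne b 0 with rfl | hb0
    · simp [hr.le]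
    have hnb : 0 < ‖b‖ := norm_pos_iff.mpr hb0
    have hmem : (r / ‖b‖) • b ∈ closedBall (0 : EuclideanSpace ℝ (Fin n)) r := by
      rw [mem_closedBall_zero_iff, norm_smul, Real.norm_of_nonneg (by positivity),
        div_mul_cancel₀ _ hnb.ne']
    have h : r * ‖b‖ ≤ 1 := by
      have := hb _ hmem
      rwa [real_inner_smul_left, real_inner_self_eq_norm_sq, sq, ← mul_assoc,
        div_mul_cancel₀ _ hnb.ne'] at this
    rwa [le_inv_comm₀ hnb hr, inv_eq_one_div, le_div_iff₀ hnb]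
  · intro hb a ha
    rw [mem_closedBall_zero_iff] at ha
    calc ⟪a, b⟫ ≤ ‖a‖ * ‖b‖ := real_inner_le_norm a b
      _ ≤ r * r⁻¹ := mul_le_mul ha hb (norm_nonneg b) hr.le
      _ = 1 := mul_inv_cancel₀ hr.ne'

theorem isCompact_polarDual_of_mem_nhds_zero {A : Set (EuclideanSpace ℝ (Fin n))}
    (hA : A ∈ 𝓝 0) : IsCompact (polarDual A) := by
  obtain ⟨r, hr, hball⟩ := nhds_basis_closedBall.mem_iff.mp hA
  refine isCompact_of_isClosed_isBounded (isClosed_polarDual A) ?_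
  exact isBounded_closedBall.subset
    ((polarDual_anti hball).trans (polarDual_closedBall_zero hr).subset)

theorem zero_mem_interior_polarDual {A : Set (EuclideanSpace ℝ (Fin n))}
    (hA : Bornology.IsBounded A) : 0 ∈ interior (polarDual A) := by
  obtain ⟨R, hR, hAR⟩ := hA.subset_closedBall_lt 0 0
  refine mem_interior.mpr ⟨ball 0 R⁻¹, ?_, isOpen_ball, mem_ball_self (inv_pos.mpr hR)⟩
  exact ball_subset_closedBall.trans
    ((polarDual_closedBall_zero hR).superset.trans (polarDual_anti hAR))

theorem subset_polarDual_polarDual (A : Set (EuclideanSpace ℝ (Fin n))) :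
    A ⊆ polarDual (polarDual A) := fun a ha b hb => real_inner_comm a b ▸ hb a ha

theorem polarDual_polarDual {A : Set (EuclideanSpace ℝ (Fin n))} (hconv : Convex ℝ A)
    (hclosed : IsClosed A) (h0 : 0 ∈ A) : polarDual (polarDual A) = A := by
  refine Subset.antisymm (fun b hb => ?_) (subset_polarDual_polarDual A)
  by_contra hbA
  obtain ⟨f, u, hfA, hfb⟩ := geometric_hahn_banach_closed_point hconv hclosed hbA
  have hu : 0 < u := by simpa using hfA 0 h0
  set c := (InnerProductSpace.toDual ℝ _).symm f
  have hc : ∀ y, ⟪c, y⟫ = f y := fun y => InnerProductSpace.toDual_symm_apply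
  have hcA : u⁻¹ • c ∈ polarDual A := by
    intro a ha
    rw [real_inner_smul_right, real_inner_comm, hc, inv_mul_le_iff₀ hu, mul_one]
    exact (hfA a ha).le
  have hcb := hb _ hcA
  rw [real_inner_smul_left, hc, inv_mul_le_iff₀ hu, mul_one] at hcb
  exact hcb.not_gt hfb

theorem eventually_add_smul_mem_polarDual {S : Set (EuclideanSpace ℝ (Fin n))} (hS : S.Finite)
    {x v : EuclideanSpace ℝ (Fin n)} (hx : x ∈ polarDual S)
    (hv : ∀ a ∈ S, ⟪a, x⟫ = 1 → ⟪a, v⟫ = 0) :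
    ∀ᶠ s in 𝓝 (0 : ℝ), x + s • v ∈ polarDual S := by
  refine (hS.eventually_all (p := fun a s => ⟪a, x + s • v⟫ ≤ 1)).mpr fun a ha => ?_
  rcases (hx a ha).lt_or_eq with hlt | heq
  · have hcont : Continuous fun s : ℝ => ⟪a, x + s • v⟫ := by fun_prop
    refine (hcont.tendsto' 0 _ ?_).eventually_lt_const hlt |>.mono fun _ => le_of_lt
    simp
  · refine Eventually.of_forall fun s => ?_
    rw [inner_add_right, real_inner_smul_right, heq, hv a ha heq]
    simp

theorem injOn_activeConstraints_extremePoints_polarDual {S : Set (EuclideanSpace ℝ (Fin n))}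
    (hS : S.Finite) :
    InjOn (fun x => {a ∈ S | ⟪a, x⟫ = 1}) ((polarDual S).extremePoints ℝ) := by
  intro x hx y _ hxy
  have horth : ∀ a ∈ S, ⟪a, x⟫ = 1 → ⟪a, y - x⟫ = 0 := fun a ha hax => by
    have hay : ⟪a, y⟫ = 1 := ((Set.ext_iff.mp hxy a).mp ⟨ha, hax⟩).2
    rw [inner_sub_right, hax, hay, sub_self]
  have hyx : y - x = 0 := eq_zero_of_mem_extremePoints_of_eventually_add_smul_mem hx
    (eventually_add_smul_mem_polarDual hS hx.1 horth)
  exact (sub_eq_zero.mp hyx).symm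

theorem finite_extremePoints_polarDual {S : Set (EuclideanSpace ℝ (Fin n))} (hS : S.Finite) :
    ((polarDual S).extremePoints ℝ).Finite :=
  Finite.of_finite_image (hS.finite_subsets.subset (image_subset_iff.mpr fun _ _ => sep_subset _ _))
    (injOn_activeConstraints_extremePoints_polarDual hS)

theorem isPolytope_of_finite_extremePoints {K : Set (EuclideanSpace ℝ (Fin n))}
    (hcomp : IsCompact K) (hconv : Convex ℝ K) (hfin : (K.extremePoints ℝ).Finite) :
    IsPolytope K :=
  ⟨_, hfin, (closure_convexHull_extremePoints hcomp hconv).symm.trans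
    (hfin.isClosed_convexHull ℝ).closure_eq⟩

end PolarDual

/-- If `A` is a polytope whose interior contains the origin, then `A*` is a
polytope whose interior contains the origin, and `A** = A`. -/
theorem polarDual_polytope (n : ℕ) (A : Set (EuclideanSpace ℝ (Fin n)))
    (hA : IsPolytope A) (h0 : (0 : EuclideanSpace ℝ (Fin n)) ∈ interior A) :
    IsPolytope (polarDual A) ∧
    (0 : EuclideanSpace ℝ (Fin n)) ∈ interior (polarDual A) ∧
    polarDual (polarDual A) = A := by
  obtain ⟨S, hS, rfl⟩ := hA
  have hcompact : IsCompact (polarDual (convexHull ℝ S)) :=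
    isCompact_polarDual_of_mem_nhds_zero (mem_interior_iff_mem_nhds.mp h0)
  have hext : ((polarDual (convexHull ℝ S)).extremePoints ℝ).Finite := by
    rw [polarDual_convexHull]
    exact finite_extremePoints_polarDual hS
  refine ⟨isPolytope_of_finite_extremePoints hcompact (convex_polarDual _) hext,
    zero_mem_interior_polarDual (hS.isCompact_convexHull ℝ).isBounded, ?_⟩
  exact polarDual_polarDual (convex_convexHull ℝ S) (hS.isClosed_convexHull ℝ) (interior_subset h0)
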